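/- arXiv:2505.06742 — 4 statements merged into one kernel-verified Lean document; each statement's English description precedes it below -/
import Mathlib

section
/- The maps C ↦ C^{⟨d⟩} and C ↦ C_{*d} are monotone increasing functions of C for every fixed positive integer d. -/
def IsMacaulayExp (d C : ℕ) (ε : ℕ → ℤ) : Prop :=
  (∀ i ∈ Finset.Icc 1 d, (-1 : ℤ) ≤ ε i) ∧
  (∀ i ∈ Finset.Icc 1 d, ∀ j ∈ Finset.Icc 1 d, i ≤ j → ε i ≤ ε j) ∧
  (C : ℤ) = ∑ i ∈ Finset.Icc 1 d, (Nat.choose ((i : ℤ) + ε i).toNat i : ℤ)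

/-!
With `m i = i + ε i`, a Macaulay expansion is a strictly increasing sequence `m 1 < ⋯ < m d` with
`C = ∑ binom(m i, i)`, and by Pascal's rule such a sum stays below `binom(m d + 1, d)`. Hence two
expansions compare like their top entries: if `m d < m' d` every sum of this shape is dominated by
its top term on the `m'` side, if `m d = m' d` the top terms cancel and one inducts on `d`, and
`m d > m' d` would force `C > C'`. The domination only uses that the summands form a monotone family
obeying Pascal's rule, which holds for `binom(x + 1, i + 1)` (giving `C^⟨d⟩`) and for
`binom(x - 1, i - 1)` (giving `1 + C_{*d}`).
-/

open Finset

namespace Macaulay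

variable (φ : ℕ → ℕ → ℕ)

theorem sum_add_le_of_strictMonoOn (hmono : ∀ i, Monotone (φ i))
    (hpascal : ∀ k M, 1 ≤ k → 1 ≤ M → φ (k + 1) (M + 1) = φ k M + φ (k + 1) M)
    (c : ℕ) (hbase : ∀ x, φ 1 x + c ≤ φ 1 (x + 1)) {k : ℕ} (hk : 1 ≤ k) {m : ℕ → ℕ}
    (hm : StrictMonoOn m (Icc 1 k)) :
    ∑ i ∈ Icc 1 k, φ i (m i) + c ≤ φ k (m k + 1) := by
  induction k, hk using Nat.le_induction with
  | base => simpa using hbase (m 1)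
  | succ k hk ih =>
    have hlt : m k < m (k + 1) := hm (by simp; omega) (by simp) (by omega)
    have ih := ih (hm.mono (Icc_subset_Icc_right (by omega)))
    calc ∑ i ∈ Icc 1 (k + 1), φ i (m i) + c
        = (∑ i ∈ Icc 1 k, φ i (m i) + c) + φ (k + 1) (m (k + 1)) := by
          rw [sum_Icc_succ_top (by omega)]; ring
      _ ≤ φ k (m (k + 1)) + φ (k + 1) (m (k + 1)) := by gcongr; exact ih.trans (hmono k hlt)
      _ = φ (k + 1) (m (k + 1) + 1) := (hpascal k _ hk (by omega)).symm

theorem sum_choose_lt_choose {k : ℕ} (hk : 1 ≤ k) {m : ℕ → ℕ} (hm : StrictMonoOn m (Icc 1 k)) :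
    ∑ i ∈ Icc 1 k, (m i).choose i < (m k + 1).choose k :=
  sum_add_le_of_strictMonoOn (fun i x => x.choose i) Nat.choose_mono
    (fun k M _ _ => Nat.choose_succ_succ M k) 1 (fun x => by simp) hk hm

theorem sum_le_sum_of_sum_choose_le (hmono : ∀ i, Monotone (φ i))
    (hpascal : ∀ k M, 1 ≤ k → 1 ≤ M → φ (k + 1) (M + 1) = φ k M + φ (k + 1) M)
    {d : ℕ} {m m' : ℕ → ℕ} (hm : StrictMonoOn m (Icc 1 d)) (hm' : StrictMonoOn m' (Icc 1 d))
    (h : ∑ i ∈ Icc 1 d, (m i).choose i ≤ ∑ i ∈ Icc 1 d, (m' i).choose i) :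
    ∑ i ∈ Icc 1 d, φ i (m i) ≤ ∑ i ∈ Icc 1 d, φ i (m' i) := by
  induction d with
  | zero => simp
  | succ d ih =>
    have hsum_le_top : ∀ f : ℕ → ℕ, f (d + 1) ≤ ∑ i ∈ Icc 1 (d + 1), f i := fun f => by
      rw [sum_Icc_succ_top (by omega)]; exact Nat.le_add_left _ _
    rcases lt_trichotomy (m (d + 1)) (m' (d + 1)) with hlt | heq | hgt
    · calc ∑ i ∈ Icc 1 (d + 1), φ i (m i)
          ≤ φ (d + 1) (m (d + 1) + 1) := by
            simpa using sum_add_le_of_strictMonoOn φ hmono hpascal 0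
              (fun x => hmono 1 x.le_succ) (by omega) hm
        _ ≤ φ (d + 1) (m' (d + 1)) := hmono _ hlt
        _ ≤ ∑ i ∈ Icc 1 (d + 1), φ i (m' i) := hsum_le_top fun i => φ i (m' i)
    · have hrestrict : ∀ {n : ℕ → ℕ}, StrictMonoOn n (Icc 1 (d + 1)) → StrictMonoOn n (Icc 1 d) :=
        fun hn => hn.mono (Icc_subset_Icc_right (by omega))
      rw [sum_Icc_succ_top (by omega), sum_Icc_succ_top (by omega), heq] at h ⊢
      exact Nat.add_le_add_right (ih (hrestrict hm) (hrestrict hm') (by omega)) _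
    · refine absurd h (not_le.2 ?_)
      calc ∑ i ∈ Icc 1 (d + 1), (m' i).choose i
          < (m' (d + 1) + 1).choose (d + 1) := sum_choose_lt_choose (by omega) hm'
        _ ≤ (m (d + 1)).choose (d + 1) := Nat.choose_le_choose _ hgt
        _ ≤ ∑ i ∈ Icc 1 (d + 1), (m i).choose i := hsum_le_top fun i => (m i).choose i

end Macaulay

namespace IsMacaulayExp

variable {d C : ℕ} {ε : ℕ → ℤ}

theorem add_nonneg (h : IsMacaulayExp d C ε) {i : ℕ} (hi : i ∈ Icc 1 d) : 0 ≤ (i : ℤ) + ε i := by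
  have := h.1 i hi
  have := (mem_Icc.1 hi).1
  omega

theorem strictMonoOn (h : IsMacaulayExp d C ε) :
    StrictMonoOn (fun i : ℕ => ((i : ℤ) + ε i).toNat) (Icc 1 d) := fun i hi j hj hij => by
  have := h.2.1 i hi j hj hij.le
  have := h.add_nonneg hi
  simp only
  omega

theorem sum_choose_toNat_add_one (h : IsMacaulayExp d C ε) :
    ∑ i ∈ Icc 1 d, ((i : ℤ) + ε i + 1).toNat.choose (i + 1) =
      ∑ i ∈ Icc 1 d, (((i : ℤ) + ε i).toNat + 1).choose (i + 1) :=
  sum_congr rfl fun i hi => by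
    have := h.add_nonneg hi
    congr 1
    omega

theorem eq_sum_choose (h : IsMacaulayExp d C ε) :
    C = ∑ i ∈ Icc 1 d, (((i : ℤ) + ε i).toNat).choose i := by
  exact_mod_cast h.2.2

end IsMacaulayExp

/-- The maps `C ↦ C^{⟨d⟩}` and `C ↦ C_{*d}` are monotone increasing in `C`, where
`C^{⟨d⟩} = Σ_{i=1}^d binom(i + ε_i + 1, i + 1)` and
`C_{*d} = Σ_{i=2}^d binom(i + ε_i − 1, i − 1)` are defined via the Macaulay `d`-expansion. -/
theorem macaulay_functions_monotone (d : ℕ) (hd : 0 < d) (C C' : ℕ) (hCC : C ≤ C')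
    (ε ε' : ℕ → ℤ) (hε : IsMacaulayExp d C ε) (hε' : IsMacaulayExp d C' ε') :
    (∑ i ∈ Finset.Icc 1 d, Nat.choose ((i : ℤ) + ε i + 1).toNat (i + 1) ≤
      ∑ i ∈ Finset.Icc 1 d, Nat.choose ((i : ℤ) + ε' i + 1).toNat (i + 1)) ∧
    (∑ i ∈ Finset.Icc 2 d, Nat.choose ((i : ℤ) + ε i - 1).toNat (i - 1) ≤
      ∑ i ∈ Finset.Icc 2 d, Nat.choose ((i : ℤ) + ε' i - 1).toNat (i - 1)) := by
  have hC := hε.eq_sum_choose ▸ hε'.eq_sum_choose ▸ hCC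
  constructor
  · rw [hε.sum_choose_toNat_add_one, hε'.sum_choose_toNat_add_one]
    exact Macaulay.sum_le_sum_of_sum_choose_le (fun i x => (x + 1).choose (i + 1))
      (fun i _ _ hxy => Nat.choose_le_choose _ (by omega))
      (fun k M _ _ => Nat.choose_succ_succ (M + 1) (k + 1)) hε.strictMonoOn hε'.strictMonoOn hC
  · have key := Macaulay.sum_le_sum_of_sum_choose_le (fun i x => (x - 1).choose (i - 1))
      (fun i _ _ hxy => Nat.choose_le_choose _ (by omega))
      (fun k M hk hM => by
        have := Nat.choose_succ_succ' (M - 1) (k - 1)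
        rwa [Nat.sub_add_cancel hk, Nat.sub_add_cancel hM] at this)
      hε.strictMonoOn hε'.strictMonoOn hC
    rw [Icc_eq_cons_Ioc hd, sum_cons, sum_cons, ← Icc_add_one_left_eq_Ioc] at key
    have htoNat : ∀ x : ℤ, (x - 1).toNat = x.toNat - 1 := fun x => by omega
    simpa only [htoNat, Nat.sub_self, Nat.choose_zero_right, Nat.add_le_add_iff_left,
      Nat.reduceAdd] using key
end

section
/- Let I ⊂ S be a homogeneous ideal in a polynomial ring over ℂ, d ≥ 2 an integer, and h = h_I(d). Then for all 0 ≤ k ≤ d: if h ≤ d then h_I(k) ≥ min(h, k+1); if d+1 ≤ h ≤ 2d then h_I(k) ≥ min(k + (h − d), 2k + 1); and if h = 2d+1 then h_I(k) ≥ 2k + 1. -/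
/-!
Fix a monomial order. In degree `k`, the classes of the monomials of degree `k` that are not
leading monomials of homogeneous elements of `I` of degree `k` (the standard monomials) form a
basis of the image of `S_k` in `S/I`, so `h_I(k)` counts them. Dividing a standard monomial by a
variable it contains gives a standard monomial again, so the standard monomials of degree `k + 1`
have their whole shadow among those of degree `k`. For such families Macaulay's bound gives, in the
two ranges needed here, `h(k + 1) ≤ h(k)` when `h(k) ≤ k` and `h(k + 1) ≤ h(k) + 1` when
`h(k) ≤ 2k`; these are proved by splitting off the monomials divisible by one variable. Descending
induction from degree `d` then yields the three lower bounds.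
-/

open MvPolynomial

noncomputable def hilb (n : ℕ) (I : Ideal (MvPolynomial (Fin (n + 1)) ℂ)) (k : ℕ) : ℕ :=
  Module.finrank ℂ (Submodule.map (Ideal.Quotient.mkₐ ℂ I).toLinearMap
    (homogeneousSubmodule (Fin (n + 1)) ℂ k))

open Finset Submodule
open scoped MonomialOrder

section Shadow

variable {σ : Type*}

lemma Finsupp.single_one_le_of_mem_support {e : σ →₀ ℕ} {b : σ} (hb : b ∈ e.support) :
    .single b 1 ≤ e :=
  Finsupp.single_le_iff.mpr (Nat.one_le_iff_ne_zero.mpr (Finsupp.mem_support_iff.mp hb))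

def ShadowSubset (V : Finset σ) (k : ℕ) (T S : Finset (σ →₀ ℕ)) : Prop :=
  ∀ e ∈ T, e.degree = k + 1 ∧ e.support ⊆ V ∧ ∀ b ∈ e.support, e - .single b 1 ∈ S

lemma card_eq_card_filter_add_card_preimage (a : σ) (S : Finset (σ →₀ ℕ)) :
    #S = #(S.filter (· a = 0)) +
      #(S.preimage (· + .single a 1) (add_left_injective _).injOn) := by
  classical
  rw [← card_image_of_injective (S.preimage _ (add_left_injective _).injOn)
    (add_left_injective _), image_preimage, ← card_filter_add_card_filter_not (s := S) (· a = 0)]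
  congr 2
  ext e
  simp only [mem_filter, Set.mem_range]
  refine and_congr_right fun _ => ⟨fun he => ⟨e - .single a 1, ?_⟩, ?_⟩
  · exact tsub_add_cancel_of_le
      (Finsupp.single_one_le_of_mem_support (Finsupp.mem_support_iff.mpr he))
  · rintro ⟨f, rfl⟩
    simp

namespace ShadowSubset

variable {V : Finset σ} {k : ℕ} {T S : Finset (σ →₀ ℕ)}

lemma card_eq_zero (h : ShadowSubset V k T S) (hS : #S = 0) : #T = 0 := by
  refine Finset.card_eq_zero.mpr (eq_empty_of_forall_notMem fun e he => ?_)
  obtain ⟨hdeg, -, hshadow⟩ := h e he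
  obtain ⟨b, hb⟩ : e.support.Nonempty := by
    rw [Finsupp.support_nonempty_iff]
    rintro rfl
    simp at hdeg
  simpa [Finset.card_eq_zero.mp hS] using hshadow b hb

lemma eq_empty_of_empty (h : ShadowSubset ∅ k T S) : T = ∅ := by
  refine eq_empty_of_forall_notMem fun e he => ?_
  obtain ⟨hdeg, hV, -⟩ := h e he
  rw [subset_empty, Finsupp.support_eq_empty] at hV
  simp [hV] at hdeg

lemma filter_eq_zero [DecidableEq σ] {a : σ} (h : ShadowSubset (insert a V) k T S)
    (ha : a ∉ V) : ShadowSubset V k (T.filter (· a = 0)) (S.filter (· a = 0)) := by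
  intro e he
  rw [mem_filter] at he
  obtain ⟨hdeg, hV, hshadow⟩ := h e he.1
  refine ⟨hdeg, fun b hb => ?_, fun b hb => mem_filter.mpr ⟨hshadow b hb, ?_⟩⟩
  · refine (mem_insert.mp (hV hb)).resolve_left ?_
    rintro rfl
    exact Finsupp.mem_support_iff.mp hb he.2
  · simp [he.2]

lemma preimage_add_single (a : σ) (h : ShadowSubset V (k + 1) T S) :
    ShadowSubset V k (T.preimage (· + .single a 1) (add_left_injective _).injOn)
      (S.preimage (· + .single a 1) (add_left_injective _).injOn) := by
  intro e he
  rw [mem_preimage] at he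
  obtain ⟨hdeg, hV, hshadow⟩ := h _ he
  refine ⟨by simpa [Finsupp.degree_single] using hdeg, ?_, fun b hb => ?_⟩
  · exact (Finsupp.support_mono le_self_add).trans hV
  · have hb' : b ∈ (e + .single a 1).support := Finsupp.support_mono le_self_add hb
    rw [mem_preimage, tsub_add_eq_add_tsub (Finsupp.single_one_le_of_mem_support hb)]
    exact hshadow b hb'

lemma preimage_add_single_subset (a : σ) (h : ShadowSubset V k T S) :
    T.preimage (· + .single a 1) (add_left_injective _).injOn ⊆ S := by
  intro e he
  rw [mem_preimage] at he
  simpa using (h _ he).2.2 a (by simp)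

theorem card_le [DecidableEq σ] (h : ShadowSubset V k T S) (hS : #S ≤ k) : #T ≤ #S := by
  induction V using Finset.induction_on generalizing k T S with
  | empty => simp [h.eq_empty_of_empty]
  | insert a V ha ihV =>
    induction k generalizing T S with
    | zero => simp [h.card_eq_zero (Nat.le_zero.mp hS)]
    | succ k ihk =>
      -- split off the monomials divisible by `x a`; divided by `x a` they have degree `k + 1`
      have hS_split := card_eq_card_filter_add_card_preimage a S
      have hT_split := card_eq_card_filter_add_card_preimage a T
      have hfree₀ := (h.filter_eq_zero ha).card_eq_zero
      have hfree := ihV (h.filter_eq_zero ha)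
      have hdiv := ihk (h.preimage_add_single a)
      have hdiv_le := card_le_card (h.preimage_add_single_subset a)
      omega

theorem card_le_add_one [DecidableEq σ] (h : ShadowSubset V k T S) (hS : #S ≤ 2 * k) :
    #T ≤ #S + 1 := by
  induction V using Finset.induction_on generalizing k T S with
  | empty => simp [h.eq_empty_of_empty]
  | insert a V ha ihV =>
    induction k generalizing T S with
    | zero => simp [h.card_eq_zero (Nat.le_zero.mp hS)]
    | succ k ihk =>
      have hS_split := card_eq_card_filter_add_card_preimage a S
      have hT_split := card_eq_card_filter_add_card_preimage a T
      have hfree := (h.filter_eq_zero ha).card_le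
      have hfree' := ihV (h.filter_eq_zero ha)
      have hdiv := (h.preimage_add_single a).card_le
      have hdiv' := ihk (h.preimage_add_single a)
      have hdiv_le := card_le_card (h.preimage_add_single_subset a)
      omega

end ShadowSubset

end Shadow

section StandardExponents

variable {σ K : Type*} [Field K]

lemma MvPolynomial.isHomogeneous_iff_forall_degree_eq {f : MvPolynomial σ K} {k : ℕ} :
    f.IsHomogeneous k ↔ ∀ d ∈ f.support, d.degree = k := by
  rw [← mem_homogeneousSubmodule, homogeneousSubmodule_eq_finsupp_supported]
  rfl

lemma MonomialOrder.degree_sub_lt_of_coeff_eq (m : MonomialOrder σ) {f g : MvPolynomial σ K}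
    (hg : m.degree g ≼[m] m.degree f) (hcoeff : coeff (m.degree f) g = coeff (m.degree f) f)
    (hfg : f - g ≠ 0) : m.degree (f - g) ≺[m] m.degree f := by
  refine lt_of_le_of_ne (m.degree_sub_le.trans (sup_le le_rfl hg)) fun h => ?_
  have hne := m.coeff_degree_ne_zero_iff.mpr hfg
  rw [m.toSyn.injective h, coeff_sub, hcoeff, sub_self] at hne
  exact hne rfl

variable (m : MonomialOrder σ) (I : Ideal (MvPolynomial σ K))

def IsLeadingExponent (e : σ →₀ ℕ) : Prop :=
  ∃ g ∈ I, g.IsHomogeneous e.degree ∧ g ≠ 0 ∧ m.degree g = e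

variable {m I} in
lemma IsLeadingExponent.add_single {e : σ →₀ ℕ} (he : IsLeadingExponent m I e) (b : σ) :
    IsLeadingExponent m I (e + .single b 1) := by
  obtain ⟨g, hgI, hg, hg0, rfl⟩ := he
  refine ⟨X b * g, I.mul_mem_left _ hgI, ?_, mul_ne_zero (X_ne_zero b) hg0, ?_⟩
  · simpa [Finsupp.degree_single, add_comm] using (isHomogeneous_X K b).mul hg
  · rw [m.degree_mul (X_ne_zero b) hg0, m.degree_X, add_comm]

variable [Fintype σ]

open Classical in
noncomputable def standardExponents (k : ℕ) : Finset (σ →₀ ℕ) :=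
  (univ.finsuppAntidiag k).filter fun e => ¬ IsLeadingExponent m I e

variable {m I} in
lemma mem_standardExponents {k : ℕ} {e : σ →₀ ℕ} :
    e ∈ standardExponents m I k ↔ e.degree = k ∧ ¬ IsLeadingExponent m I e := by
  simp [standardExponents, Finsupp.degree_eq_sum]

variable {m I} in
lemma eq_zero_of_mem_of_support_subset_standardExponents {k : ℕ} {p : MvPolynomial σ K}
    (hpI : p ∈ I) (hp : p.support ⊆ standardExponents m I k) : p = 0 := by
  by_contra hp0
  obtain ⟨hdeg, hstd⟩ := mem_standardExponents.mp (hp (m.degree_mem_support hp0))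
  refine hstd ⟨p, hpI, isHomogeneous_iff_forall_degree_eq.mpr fun d hd => ?_, hp0, rfl⟩
  rw [hdeg]
  exact (mem_standardExponents.mp (hp hd)).1

noncomputable def standardMonomial (k : ℕ) (e : standardExponents m I k) :
    MvPolynomial σ K ⧸ I :=
  Ideal.Quotient.mkₐ K I (monomial e 1)

lemma linearIndependent_standardMonomial (k : ℕ) :
    LinearIndependent K (standardMonomial m I k) := by
  classical
  rw [Fintype.linearIndependent_iff]
  intro c hc e₀
  set p : MvPolynomial σ K := ∑ e : standardExponents m I k, monomial (e : σ →₀ ℕ) (c e)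
  have hpI : p ∈ I := by
    rw [← Ideal.Quotient.eq_zero_iff_mem, ← Ideal.Quotient.mkₐ_eq_mk K, ← hc, map_sum]
    refine sum_congr rfl fun e _ => ?_
    rw [standardMonomial, ← map_smul, smul_monomial, smul_eq_mul, mul_one]
  have hp : p.support ⊆ standardExponents m I k := by
    intro d hd
    obtain ⟨e, -, he⟩ := mem_biUnion.mp (support_sum hd)
    rw [mem_singleton.mp (support_monomial_subset he)]
    exact e.2
  simpa [p, coeff_sum, coeff_monomial] using
    congr_arg (coeff e₀) (eq_zero_of_mem_of_support_subset_standardExponents hpI hp)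

lemma mkₐ_mem_span_standardMonomial {k : ℕ} {f : MvPolynomial σ K} (hf : f.IsHomogeneous k) :
    Ideal.Quotient.mkₐ K I f ∈ span K (Set.range (standardMonomial m I k)) := by
  generalize hD : m.toSyn (m.degree f) = D
  induction D using WellFoundedLT.induction generalizing f with
  | ind D ih =>
    by_cases hf0 : f = 0
    · simp [hf0]
    -- cancel the leading term of `f`, either by an element of `I` or by a standard monomial
    obtain ⟨g, hg, hgdeg, hgcoeff, hgspan⟩ : ∃ g : MvPolynomial σ K, g.IsHomogeneous k ∧
        m.degree g ≼[m] m.degree f ∧ coeff (m.degree f) g = coeff (m.degree f) f ∧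
        Ideal.Quotient.mkₐ K I g ∈ span K (Set.range (standardMonomial m I k)) := by
      have hdeg := isHomogeneous_iff_forall_degree_eq.mp hf _ (m.degree_mem_support hf0)
      by_cases hlead : IsLeadingExponent m I (m.degree f)
      · obtain ⟨g, hgI, hg, hg0, hgf⟩ := hlead
        rw [hdeg, ← mem_homogeneousSubmodule] at hg
        refine ⟨(m.leadingCoeff f / m.leadingCoeff g) • g, smul_mem _ _ hg,
          m.degree_smul_le.trans_eq (congrArg _ hgf), ?_, ?_⟩
        · rw [coeff_smul, ← hgf, smul_eq_mul, ← MonomialOrder.leadingCoeff,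
            div_mul_cancel₀ _ (m.leadingCoeff_ne_zero_iff.mpr hg0), hgf,
            MonomialOrder.leadingCoeff]
        · simp [(Ideal.Quotient.eq_zero_iff_mem).mpr hgI]
      · refine ⟨m.leadingTerm f, isHomogeneous_monomial _ hdeg,
          (congrArg _ (m.degree_leadingTerm f)).le, by
            classical simp [MonomialOrder.leadingTerm, MonomialOrder.leadingCoeff, coeff_monomial],
          ?_⟩
        rw [MonomialOrder.leadingTerm, ← mul_one (m.leadingCoeff f), ← smul_eq_mul,
          ← smul_monomial, map_smul]
        exact smul_mem _ _
          (subset_span ⟨⟨_, mem_standardExponents.mpr ⟨hdeg, hlead⟩⟩, rfl⟩)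
    have hsub :
        Ideal.Quotient.mkₐ K I (f - g) ∈ span K (Set.range (standardMonomial m I k)) := by
      by_cases hfg : f - g = 0
      · simp [hfg]
      exact ih _ (hD ▸ m.degree_sub_lt_of_coeff_eq hgdeg hgcoeff hfg) (hf.sub hg) rfl
    simpa using add_mem hsub hgspan

lemma span_standardMonomial (k : ℕ) :
    span K (Set.range (standardMonomial m I k)) =
      (homogeneousSubmodule σ K k).map (Ideal.Quotient.mkₐ K I).toLinearMap := by
  refine le_antisymm (span_le.mpr (Set.range_subset_iff.mpr fun e => ?_))
    (map_le_iff_le_comap.mpr fun f hf => mkₐ_mem_span_standardMonomial m I hf)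
  exact ⟨_, isHomogeneous_monomial _ (mem_standardExponents.mp e.2).1, rfl⟩

theorem finrank_map_mkₐ_homogeneousSubmodule (k : ℕ) :
    Module.finrank K ((homogeneousSubmodule σ K k).map (Ideal.Quotient.mkₐ K I).toLinearMap) =
      #(standardExponents m I k) := by
  rw [← span_standardMonomial m,
    finrank_span_eq_card (linearIndependent_standardMonomial m I k), Fintype.card_coe]

lemma shadowSubset_standardExponents (k : ℕ) :
    ShadowSubset univ k (standardExponents m I (k + 1)) (standardExponents m I k) := by
  intro e he
  obtain ⟨hdeg, hstd⟩ := mem_standardExponents.mp he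
  refine ⟨hdeg, subset_univ _, fun b hb => ?_⟩
  have hdiv := tsub_add_cancel_of_le (Finsupp.single_one_le_of_mem_support hb)
  refine mem_standardExponents.mpr ⟨?_, fun hlead => hstd ?_⟩
  · have := congrArg Finsupp.degree hdiv
    rw [map_add, Finsupp.degree_single, hdeg] at this
    omega
  · simpa [hdiv] using hlead.add_single b

end StandardExponents

theorem le_of_growth_bounds {h : ℕ → ℕ}
    (h_succ_le : ∀ j, h j ≤ j → h (j + 1) ≤ h j)
    (h_succ_le_add_one : ∀ j, h j ≤ 2 * j → h (j + 1) ≤ h j + 1) (t : ℕ → ℕ)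
    (ht_le : ∀ j, t j ≤ 2 * j + 1) (ht_succ : ∀ j, t j ≤ t (j + 1))
    (ht_jump : ∀ j, j + 1 < t j → t j < t (j + 1))
    {d k : ℕ} (hk : k ≤ d) (hd : t d ≤ h d) : t k ≤ h k := by
  induction hk using Nat.decreasingInduction with
  | self => exact hd
  | of_succ j _ ih =>
    have := h_succ_le j
    have := h_succ_le_add_one j
    have := ht_le j
    have := ht_succ j
    have := ht_jump j
    omega

section Hilbert

variable {n : ℕ} (I : Ideal (MvPolynomial (Fin (n + 1)) ℂ))

lemma hilb_eq_card_standardExponents (k : ℕ) :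
    hilb n I k = #(standardExponents MonomialOrder.lex I k) :=
  finrank_map_mkₐ_homogeneousSubmodule _ I k

lemma hilb_succ_le {k : ℕ} (h : hilb n I k ≤ k) : hilb n I (k + 1) ≤ hilb n I k := by
  simp only [hilb_eq_card_standardExponents] at h ⊢
  exact (shadowSubset_standardExponents _ I k).card_le h

lemma hilb_succ_le_add_one {k : ℕ} (h : hilb n I k ≤ 2 * k) :
    hilb n I (k + 1) ≤ hilb n I k + 1 := by
  simp only [hilb_eq_card_standardExponents] at h ⊢
  exact (shadowSubset_standardExponents _ I k).card_le_add_one h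

end Hilbert

theorem hilb_lower_bounds_general (n : ℕ) (I : Ideal (MvPolynomial (Fin (n + 1)) ℂ))
    (d : ℕ) (k : ℕ) (hk : k ≤ d) :
    (hilb n I d ≤ d → min (hilb n I d) (k + 1) ≤ hilb n I k) ∧
    (d + 1 ≤ hilb n I d → hilb n I d ≤ 2 * d →
      min (k + (hilb n I d - d)) (2 * k + 1) ≤ hilb n I k) ∧
    (hilb n I d = 2 * d + 1 → 2 * k + 1 ≤ hilb n I k) := by
  have descend := le_of_growth_bounds (fun _ => hilb_succ_le I) (fun _ => hilb_succ_le_add_one I)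
  refine ⟨fun hH => ?_, fun hH₁ hH₂ => ?_, fun hH => ?_⟩
  · exact descend (fun j => min (hilb n I d) (j + 1)) (by omega) (by omega) (by omega) hk
      (by omega)
  · exact descend (fun j => min (j + (hilb n I d - d)) (2 * j + 1)) (by omega) (by omega)
      (by omega) hk (by omega)
  · exact descend (fun j => 2 * j + 1) (by omega) (by omega) (by omega) hk (by omega)

/-- Lower bounds for the Hilbert function below degree `d` in terms of `h = h_I(d)`. -/
theorem hilb_lower_bounds (n : ℕ) (I : Ideal (MvPolynomial (Fin (n + 1)) ℂ))
    (hhom : ∀ f ∈ I, ∀ k : ℕ, homogeneousComponent k f ∈ I)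
    (d : ℕ) (hd : 2 ≤ d) (k : ℕ) (hk : k ≤ d) :
    (hilb n I d ≤ d → min (hilb n I d) (k + 1) ≤ hilb n I k) ∧
    (d + 1 ≤ hilb n I d → hilb n I d ≤ 2 * d →
      min (k + (hilb n I d - d)) (2 * k + 1) ≤ hilb n I k) ∧
    (hilb n I d = 2 * d + 1 → 2 * k + 1 ≤ hilb n I k) :=
  hilb_lower_bounds_general n I d k hk
end

section
/- In the setting of a homogeneous complete intersection ideal I = (f_0, ..., f_n) in ℂ[x_0, ..., x_n] with d_i = deg f_i, the element det(Jac) annihilates each variable modulo I; that is, for each k, det(∂f_i/∂x_j) · x_k ∈ I. -/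
open MvPolynomial

lemma X_mul_pderiv_monomial' {σ : Type*} [DecidableEq σ] (j : σ) (s : σ →₀ ℕ) (a : ℂ) :
    X j * pderiv j (monomial s a) = monomial s (a * s j) := by
  rw [pderiv_monomial]
  rcases Nat.eq_zero_or_pos (s j) with h | h
  · simp [h]
  · rw [X, monomial_mul, one_mul]
    have hle : Finsupp.single j 1 ≤ s := by
      rw [Finsupp.single_le_iff]; exact h
    rw [add_tsub_cancel_of_le hle]

lemma euler_identity {σ : Type*} [Fintype σ] [DecidableEq σ] {d : ℕ}
    {f : MvPolynomial σ ℂ} (hf : f.IsHomogeneous d) :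
    ∑ j, X j * pderiv j f = C (d : ℂ) * f := by
  conv_lhs => rw [f.as_sum]
  conv_rhs => rw [f.as_sum]
  rw [Finset.mul_sum]
  simp only [map_sum, Finset.mul_sum]
  rw [Finset.sum_comm]
  refine Finset.sum_congr rfl fun s hs => ?_
  simp only [X_mul_pderiv_monomial']
  have hd : ∑ x : σ, (s x : ℂ) = (d : ℂ) := by
    have h1 : (Finsupp.weight 1) s = d := hf (mem_support_iff.mp hs)
    rw [Finsupp.weight_apply] at h1
    rw [Finsupp.sum_fintype] at h1
    · push_cast [← h1]
      simp
    · simp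
  calc ∑ x : σ, (monomial s) (coeff s f * (s x : ℂ))
      = (monomial s) (coeff s f * ∑ x : σ, (s x : ℂ)) := by
        rw [Finset.mul_sum, map_sum]
    _ = C (d : ℂ) * (monomial s) (coeff s f) := by
        rw [hd, C_mul_monomial, mul_comm]

/-- For a homogeneous complete intersection ideal `I = (f_0, ..., f_n)` in `ℂ[x_0, ..., x_n]`,
the Jacobian determinant `det(∂f_i/∂x_j)` annihilates each variable modulo `I`:
`det(Jac) · x_k ∈ I` for every `k`. -/
theorem jacobian_det_mul_X_mem (n : ℕ)
    (f : Fin (n + 1) → MvPolynomial (Fin (n + 1)) ℂ) (d : Fin (n + 1) → ℕ)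
    (hf : ∀ i, (f i).IsHomogeneous (d i)) (k : Fin (n + 1)) :
    (Matrix.of fun i j => pderiv j (f i)).det * X k ∈ Ideal.span (Set.range f) := by
  set A : Matrix (Fin (n+1)) (Fin (n+1)) (MvPolynomial (Fin (n+1)) ℂ) :=
    Matrix.of fun i j => pderiv j (f i) with hA
  set c : Fin (n+1) → MvPolynomial (Fin (n+1)) ℂ := fun i => X i with hc
  have hcol : (fun r => ∑ i, c i • A r i) = fun r => C (d r : ℂ) * f r := by
    funext r
    simpa [hA, hc, smul_eq_mul] using euler_identity (hf r)
  have key : A.det * X k = (A.updateCol k (fun r => C (d r : ℂ) * f r)).det := by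
    rw [← hcol, Matrix.det_updateCol_sum, hc, smul_eq_mul, mul_comm]
  rw [key, Matrix.det_succ_column _ k]
  apply Ideal.sum_mem
  intro i _
  have hik : (A.updateCol k fun r => C (d r : ℂ) * f r) i k = C (d i : ℂ) * f i := by
    simp [Matrix.updateCol_apply]
  rw [hik, mul_assoc, mul_comm (C (d i : ℂ)) (f i), mul_assoc, ← mul_assoc]
  exact Ideal.mul_mem_right _ _ (Ideal.mul_mem_left _ _ (Ideal.subset_span ⟨i, rfl⟩))
end

section
/- Let I be a proper homogeneous ideal of S = ℂ[x_0, ..., x_n] containing a complete intersection ideal I_CI = (f_0, ..., f_n), and suppose both S/I and S/I_CI are artinian Gorenstein with the same socle degree. Then I = I_CI. -/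
open MvPolynomial

/-- `S/I` is a (graded) artinian Gorenstein ring with socle degree `N`: the quotient is
artinian, its socle is the degree-`N` graded piece, and that piece is 1-dimensional. -/
noncomputable def IsArtinianGorensteinOfSocleDegree (n : ℕ)
    (I : Ideal (MvPolynomial (Fin (n + 1)) ℂ)) (N : ℕ) : Prop :=
  IsArtinianRing (MvPolynomial (Fin (n + 1)) ℂ ⧸ I) ∧
  (Submodule.colon (⊥ : Ideal (MvPolynomial (Fin (n + 1)) ℂ ⧸ I))
      (Ideal.span (Set.range fun i => Ideal.Quotient.mk I (X i)))).restrictScalars ℂ =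
    Submodule.map (Ideal.Quotient.mkₐ ℂ I).toLinearMap
      (homogeneousSubmodule (Fin (n + 1)) ℂ N) ∧
  hilb n I N = 1

/-!
If `X i * g ∈ I_CI` for all `i`, the class of `g` lies in the socle of `S/I_CI`, which is the
image of the degree-`N` forms. Since `S/I_CI → S/I` restricts to a surjection between the
one-dimensional degree-`N` pieces, it is injective there, so such a `g ∈ I` already lies in
`I_CI`. Because `S/I_CI` is artinian and `I_CI` homogeneous, all forms of large degree lie in
`I_CI`, and a downward induction on the degree of the homogeneous components of `g ∈ I` gives
`I ⊆ I_CI`.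
-/

attribute [local instance] MvPolynomial.gradedAlgebra

namespace MvPolynomial

variable {σ R : Type*}

theorem exists_X_pow_mem_of_isArtinianRing [CommRing R] {J : Ideal (MvPolynomial σ R)}
    (hJ : J.IsHomogeneous (homogeneousSubmodule σ R)) [IsArtinianRing (MvPolynomial σ R ⧸ J)]
    (i : σ) : ∃ k, (X i : MvPolynomial σ R) ^ k ∈ J := by
  obtain ⟨k, y, hy⟩ := IsArtinian.exists_pow_succ_smul_dvd (Ideal.Quotient.mk J (X i))
    (1 : MvPolynomial σ R ⧸ J)
  obtain ⟨p, rfl⟩ := Ideal.Quotient.mk_surjective y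
  have hmem : X i ^ (k + 1) * p - X i ^ k ∈ J := by
    rw [← Ideal.Quotient.eq_zero_iff_mem]
    simpa [sub_eq_zero] using hy
  -- the degree-`k` component of `X i ^ (k + 1) * p - X i ^ k` is `-X i ^ k`
  have hcomp := hJ k hmem
  rw [DirectSum.decompose_sub, DirectSum.sub_apply, Submodule.coe_sub,
    DirectSum.coe_decompose_mul_of_left_mem_of_not_le (homogeneousSubmodule σ R)
      ((mem_homogeneousSubmodule _ _).2 (isHomogeneous_X_pow i (k + 1))) (by omega),
    DirectSum.decompose_of_mem_same _
      ((mem_homogeneousSubmodule _ _).2 (isHomogeneous_X_pow i k)), zero_sub] at hcomp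
  exact ⟨k, neg_mem_iff.1 hcomp⟩

theorem IsHomogeneous.mem_of_forall_X_pow_mem [CommSemiring R] [Fintype σ]
    {J : Ideal (MvPolynomial σ R)} {k : σ → ℕ} (hk : ∀ i, (X i : MvPolynomial σ R) ^ k i ∈ J)
    {m : ℕ} (hm : ∑ i, k i < m) {g : MvPolynomial σ R} (hg : g.IsHomogeneous m) : g ∈ J := by
  classical
  rw [g.as_sum]
  refine J.sum_mem fun s hs => ?_
  obtain ⟨i, hi⟩ : ∃ i, k i ≤ s i := by
    by_contra! hlt
    have hdeg : ∑ i, s i = m := by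
      rw [← Finsupp.degree_eq_sum, Finsupp.degree_eq_weight_one]
      exact hg (mem_support_iff.1 hs)
    exact (Finset.sum_le_sum fun i _ => (hlt i).le).not_gt (hdeg ▸ hm)
  have hsplit : monomial s (coeff s g) =
      X i ^ k i * monomial (s - Finsupp.single i (k i)) (coeff s g) := by
    rw [X_pow_eq_monomial, monomial_mul, one_mul,
      add_tsub_cancel_of_le (Finsupp.single_le_iff.2 hi)]
  rw [hsplit]
  exact J.mul_mem_right _ (hk i)

theorem exists_forall_isHomogeneous_mem_of_isArtinianRing [CommRing R] [Fintype σ]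
    {J : Ideal (MvPolynomial σ R)} (hJ : J.IsHomogeneous (homogeneousSubmodule σ R))
    [IsArtinianRing (MvPolynomial σ R ⧸ J)] :
    ∃ K, ∀ m, K ≤ m → ∀ g : MvPolynomial σ R, g.IsHomogeneous m → g ∈ J := by
  choose k hk using exists_X_pow_mem_of_isArtinianRing hJ
  exact ⟨∑ i, k i + 1, fun m hm g hg => hg.mem_of_forall_X_pow_mem hk hm⟩

theorem le_of_forall_X_mul_mem [CommSemiring R] {I J : Ideal (MvPolynomial σ R)}
    (hI : ∀ g ∈ I, ∀ k, homogeneousComponent k g ∈ I) {K : ℕ}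
    (hJ : ∀ m, K ≤ m → ∀ g : MvPolynomial σ R, g.IsHomogeneous m → g ∈ J)
    (hX : ∀ g ∈ I, (∀ i, X i * g ∈ J) → g ∈ J) : I ≤ J := by
  -- downward induction on the degree `m`, starting from `K`
  have hforms : ∀ j m, K ≤ m + j → ∀ g : MvPolynomial σ R, g.IsHomogeneous m → g ∈ I → g ∈ J := by
    intro j
    induction j with
    | zero => exact fun m hm g hg _ => hJ m hm g hg
    | succ j ih =>
      intro m hm g hg hgI
      refine hX g hgI fun i => ih (m + 1) (by omega) _ ?_ (I.mul_mem_left _ hgI)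
      simpa only [add_comm] using (isHomogeneous_X R i).mul hg
  intro g hg
  rw [← g.sum_homogeneousComponent]
  exact J.sum_mem fun m _ =>
    hforms K m (by omega) _ (homogeneousComponent_isHomogeneous m g) (hI g hg m)

theorem mk_mem_socle_of_forall_X_mul_mem [CommRing R] {J : Ideal (MvPolynomial σ R)}
    {g : MvPolynomial σ R} (hg : ∀ i, X i * g ∈ J) :
    Ideal.Quotient.mk J g ∈ (⊥ : Ideal (MvPolynomial σ R ⧸ J)).colon
      (Ideal.span (Set.range fun i => Ideal.Quotient.mk J (X i))) := by
  rw [Ideal.colon_span, Submodule.mem_colon]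
  rintro _ ⟨i, rfl⟩
  rw [smul_eq_mul, ← map_mul, mul_comm, Submodule.mem_bot, Ideal.Quotient.eq_zero_iff_mem]
  exact hg i

end MvPolynomial

theorem Ideal.mem_of_mk_mem_map_of_finrank_eq {K A : Type*} [Field K] [CommRing A] [Algebra K A]
    {I J : Ideal A} (hJI : J ≤ I) {W : Submodule K A}
    [FiniteDimensional K (W.map (Ideal.Quotient.mkₐ K J).toLinearMap)]
    (hrank : Module.finrank K (W.map (Ideal.Quotient.mkₐ K J).toLinearMap) =
      Module.finrank K (W.map (Ideal.Quotient.mkₐ K I).toLinearMap))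
    {g : A} (hgI : g ∈ I)
    (hgW : Ideal.Quotient.mk J g ∈ W.map (Ideal.Quotient.mkₐ K J).toLinearMap) : g ∈ J := by
  set φ := (Ideal.Quotient.factorₐ K hJI).toLinearMap.restrict
    (p := W.map (Ideal.Quotient.mkₐ K J).toLinearMap)
    (q := W.map (Ideal.Quotient.mkₐ K I).toLinearMap) (by
      rintro _ ⟨w, hw, rfl⟩
      exact ⟨w, hw, rfl⟩)
  have hφ : Function.Surjective φ := by
    rintro ⟨_, w, hw, rfl⟩
    exact ⟨⟨Ideal.Quotient.mk J w, w, hw, rfl⟩, rfl⟩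
  have : FiniteDimensional K (W.map (Ideal.Quotient.mkₐ K I).toLinearMap) :=
    Module.Finite.of_surjective φ hφ
  have hzero : φ ⟨_, hgW⟩ = φ 0 := by
    rw [map_zero]
    exact Subtype.ext (Ideal.Quotient.eq_zero_iff_mem.2 hgI)
  rw [← Ideal.Quotient.eq_zero_iff_mem]
  have hinj := (LinearMap.injective_iff_surjective_of_finrank_eq_finrank hrank).2 hφ
  exact congrArg Subtype.val (hinj hzero)

theorem eq_of_contains_complete_intersection_same_socle_degree_general (n N : ℕ)
    (f : Fin (n + 1) → MvPolynomial (Fin (n + 1)) ℂ) (d : Fin (n + 1) → ℕ)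
    (hf : ∀ i, (f i).IsHomogeneous (d i))
    (I : Ideal (MvPolynomial (Fin (n + 1)) ℂ))
    (hhom : ∀ g ∈ I, ∀ k : ℕ, homogeneousComponent k g ∈ I)
    (hsub : Ideal.span (Set.range f) ≤ I)
    (hI : IsArtinianGorensteinOfSocleDegree n I N)
    (hCI : IsArtinianGorensteinOfSocleDegree n (Ideal.span (Set.range f)) N) :
    I = Ideal.span (Set.range f) := by
  obtain ⟨hart, hsocle, hrank⟩ := hCI
  have hCIhom : (Ideal.span (Set.range f)).IsHomogeneous (homogeneousSubmodule _ ℂ) :=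
    Ideal.homogeneous_span _ _ <| by
      rintro _ ⟨i, rfl⟩
      exact ⟨d i, (mem_homogeneousSubmodule _ _).2 (hf i)⟩
  obtain ⟨K, hK⟩ := exists_forall_isHomogeneous_mem_of_isArtinianRing hCIhom
  have : FiniteDimensional ℂ _ := Module.finite_of_finrank_eq_succ hrank
  refine le_antisymm (le_of_forall_X_mul_mem hhom hK fun g hgI hX => ?_) hsub
  have hg := mk_mem_socle_of_forall_X_mul_mem hX
  rw [← Submodule.restrictScalars_mem ℂ, hsocle] at hg
  exact Ideal.mem_of_mk_mem_map_of_finrank_eq hsub (hrank.trans hI.2.2.symm) hgI hg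

/-- If a proper homogeneous ideal `I` contains a complete intersection ideal
`I_CI = (f_0, ..., f_n)` and both `S/I` and `S/I_CI` are artinian Gorenstein of the same
socle degree, then `I = I_CI`. -/
theorem eq_of_contains_complete_intersection_same_socle_degree (n N : ℕ)
    (f : Fin (n + 1) → MvPolynomial (Fin (n + 1)) ℂ) (d : Fin (n + 1) → ℕ)
    (hf : ∀ i, (f i).IsHomogeneous (d i))
    (hreg : RingTheory.Sequence.IsRegular (MvPolynomial (Fin (n + 1)) ℂ) (List.ofFn f))
    (I : Ideal (MvPolynomial (Fin (n + 1)) ℂ))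
    (hhom : ∀ g ∈ I, ∀ k : ℕ, homogeneousComponent k g ∈ I)
    (hproper : I ≠ ⊤)
    (hsub : Ideal.span (Set.range f) ≤ I)
    (hI : IsArtinianGorensteinOfSocleDegree n I N)
    (hCI : IsArtinianGorensteinOfSocleDegree n (Ideal.span (Set.range f)) N) :
    I = Ideal.span (Set.range f) :=
  eq_of_contains_complete_intersection_same_socle_degree_general n N f d hf I hhom hsub hI hCI
end
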